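/- If G is a cyclic group of order n ≥ 2, then the permanent of the adjacency matrix of the strong power graph P_s(G) equals (n - φ(n) - 1) · Σ_{r=1}^{n-1} (-1)^{r-1} (n-1-r)! [ C(n-2, r-1) + (n - 2 - φ(n)) · C(n-3, r-1) ]. -/

import Mathlib

/-- The strong power graph of a finite group `G`: distinct `a`, `b` are adjacent iff
`a ^ m₁ = b ^ m₂` for some positive integers `m₁, m₂ < |G|`. -/
def strongPowerGraph (G : Type*) [Group G] [Fintype G] : SimpleGraph G where
  Adj a b := a ≠ b ∧ ∃ m₁ m₂ : ℕ, 0 < m₁ ∧ m₁ < Fintype.card G ∧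
      0 < m₂ ∧ m₂ < Fintype.card G ∧ a ^ m₁ = b ^ m₂
  symm := by
    constructor
    rintro a b ⟨hab, m₁, m₂, h₁, h₂, h₃, h₄, h₅⟩
    exact ⟨hab.symm, m₂, m₁, h₃, h₄, h₁, h₂, h₅.symm⟩
  loopless := by constructor; rintro a ⟨h, -⟩; exact h rfl

noncomputable instance strongPowerGraph.decidableRel (G : Type*) [Group G] [Fintype G] :
    DecidableRel (strongPowerGraph G).Adj := fun _ _ => Classical.dec _

open Finset

/-!
In a cyclic group two distinct non-identity elements are powers of a common generator,
hence adjacent in `P_s(G)`, while the identity is adjacent exactly to the set `S` of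
non-identity non-generators, of size `s = n - φ(n) - 1`. So the permanent counts the
derangements `σ` of `G` with `σ 1 ∈ S` and `σ⁻¹ 1 ∈ S`. Multiplying by transpositions,
`σ ↦ (a b) σ (1 b)` turns those with `σ 1 = a`, `σ b = 1` into the permutations fixing `1`
and `b` whose only other possible fixed point is `a ≠ b`; writing `D k` for the number of
derangements of `k` points, there are `D(n-2) + [a ≠ b] D(n-3)` of them. Summing over
`a, b ∈ S` gives `s² D(n-2) + s(s-1) D(n-3)`, and the alternating sum of the statement is the
inclusion–exclusion formula for `D(n-2) + (s-1) (D(n-2) + D(n-3))`.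
-/

open Nat Equiv

theorem numDerangements_eq_sum_factorial_mul_choose (m : ℕ) :
    (numDerangements m : ℤ) =
      ∑ j ∈ range (m + 1), (-1 : ℤ) ^ j * (m - j)! * m.choose j := by
  rw [numDerangements_sum]
  refine sum_congr rfl fun j hj => ?_
  have hjm : j ≤ m := mem_range_succ_iff.mp hj
  rw [ascFactorial_eq_factorial_mul_choose, Nat.add_sub_cancel' hjm, choose_symm hjm]
  push_cast
  ring

theorem numDerangements_succ_add_eq_sum_factorial_mul_choose (m : ℕ) :
    (numDerangements (m + 1) + numDerangements m : ℤ) =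
      ∑ j ∈ range (m + 2), (-1 : ℤ) ^ j * (m + 1 - j)! * m.choose j := by
  rw [numDerangements_eq_sum_factorial_mul_choose, numDerangements_eq_sum_factorial_mul_choose,
    sum_range_succ' _ (m + 1), sum_range_succ' _ (m + 1)]
  simp only [choose_succ_succ', Nat.add_sub_add_right, Nat.cast_add, mul_add, sum_add_distrib,
    pow_succ, mul_neg_one, neg_mul, sum_neg_distrib, pow_zero, one_mul, choose_zero_right,
    cast_one, mul_one, Nat.sub_zero]
  ring

theorem sum_Icc_alternating_factorial_mul_choose {n : ℕ} (hn : 3 ≤ n) (c : ℤ) :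
    ∑ r ∈ Icc 1 (n - 1), (-1 : ℤ) ^ (r - 1) * (n - 1 - r)! *
        ((n - 2).choose (r - 1) + c * (n - 3).choose (r - 1)) =
      numDerangements (n - 2) + c * (numDerangements (n - 2) + numDerangements (n - 3)) := by
  obtain ⟨m, rfl⟩ : ∃ m, n = m + 3 := ⟨n - 3, by omega⟩
  rw [show m + 3 - 2 = m + 1 from rfl, show m + 3 - 3 = m from rfl,
    numDerangements_succ_add_eq_sum_factorial_mul_choose,
    numDerangements_eq_sum_factorial_mul_choose, mul_sum, ← sum_add_distrib,
    ← Ico_add_one_right_eq_Icc, sum_Ico_eq_sum_range]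
  refine sum_congr rfl fun j _ => ?_
  rw [Nat.add_sub_cancel_left, show m + 3 - 1 - (1 + j) = m + 1 - j by omega]
  ring

theorem SimpleGraph.permanent_adjMatrix {V R : Type*} [Fintype V] [DecidableEq V]
    [CommSemiring R] (G : SimpleGraph V) [DecidableRel G.Adj] :
    (G.adjMatrix R).permanent = #{σ : Perm V | ∀ i, G.Adj (σ i) i} := by
  simp [Matrix.permanent, adjMatrix_apply, Fintype.prod_boole, sum_boole]

section Derangements

variable {α : Type*} [Fintype α] [DecidableEq α]

theorem card_perm_fixedPoints_eq (s : Finset α) :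
    #{τ : Perm α | ∀ x, τ x = x ↔ x ∈ s} = numDerangements (Fintype.card α - #s) := by
  rw [← card_compl, ← Fintype.card_coe sᶜ, ← card_derangements_eq_numDerangements,
    ← Fintype.card_coe]
  refine Fintype.card_congr ((derangements.subtypeEquiv (· ∈ sᶜ)).trans ?_).symm
  exact Equiv.subtypeEquivRight fun τ => by
    simp [Function.mem_fixedPoints, Function.IsFixedPt, iff_comm]

theorem card_perm_fixedPoints_between (s : Finset α) (a : α) :
    #{τ : Perm α | (∀ x ∈ s, τ x = x) ∧ ∀ x, τ x = x → x ∈ insert a s} =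
      numDerangements (Fintype.card α - #s) +
        if a ∈ s then 0 else numDerangements (Fintype.card α - #s - 1) := by
  split_ifs with ha
  · rw [add_zero, ← card_perm_fixedPoints_eq, insert_eq_of_mem ha]
    congr 1
    ext τ
    simp only [mem_filter, mem_univ, true_and]
    grind
  · rw [← card_filter_add_card_filter_not (fun τ : Perm α => τ a ≠ a), filter_filter,
      filter_filter, Nat.sub_sub, ← card_insert_of_notMem ha, ← card_perm_fixedPoints_eq,
      ← card_perm_fixedPoints_eq]
    congr 2 <;> ext τ <;> simp only [mem_filter, mem_univ, true_and, mem_insert] <;> grind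

theorem card_derangements_apply_eq_and_apply_eq {e a b : α} (hea : e ≠ a) (heb : e ≠ b) :
    #{σ : Perm α | (∀ x, σ x ≠ x) ∧ σ e = a ∧ σ b = e} =
      numDerangements (Fintype.card α - 2) +
        if a = b then 0 else numDerangements (Fintype.card α - 3) := by
  have hΦ : #{σ : Perm α | (∀ x, σ x ≠ x) ∧ σ e = a ∧ σ b = e} =
      #{τ : Perm α | (∀ x ∈ ({e, b} : Finset α), τ x = x) ∧
        ∀ x, τ x = x → x ∈ insert a ({e, b} : Finset α)} := by
    -- `Φ` is an involution and `Φ σ` fixes `e` and `b`; any other fixed point `x` of `Φ σ` has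
    -- `σ x = swap a b x`, which for a derangement `σ` forces `x = a` (and `σ a = b`).
    let Φ : Perm α → Perm α := fun σ => swap a b * σ * swap e b
    have hΦΦ : ∀ σ, Φ (Φ σ) = σ := fun σ => by simp [Φ, mul_assoc]
    refine card_nbij' Φ Φ ?_ ?_ (fun σ _ => hΦΦ σ) (fun σ _ => hΦΦ σ) <;>
    · intro σ hσ
      simp only [coe_filter, mem_univ, true_and, Set.mem_ofPred_eq, Φ, Perm.mul_apply,
        mem_insert, mem_singleton] at hσ ⊢
      grind [EmbeddingLike.apply_eq_iff_eq]
  rw [hΦ, card_perm_fixedPoints_between, card_pair heb]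
  simp [hea.symm, Nat.sub_sub]

theorem card_derangements_apply_mem_and_inv_apply_mem {e : α} {S : Finset α} (he : e ∉ S) :
    #{σ : Perm α | (∀ x, σ x ≠ x) ∧ σ e ∈ S ∧ σ⁻¹ e ∈ S} =
      #S ^ 2 * numDerangements (Fintype.card α - 2) +
        #S * (#S - 1) * numDerangements (Fintype.card α - 3) := by
  rw [card_eq_sum_card_fiberwise (f := fun σ => (σ e, σ⁻¹ e)) (t := S ×ˢ S)
    (fun σ hσ => by simp_all), sum_product]
  have hfiber : ∀ a ∈ S, ∀ b ∈ S,
      #{σ ∈ {σ : Perm α | (∀ x, σ x ≠ x) ∧ σ e ∈ S ∧ σ⁻¹ e ∈ S} | (σ e, σ⁻¹ e) = (a, b)} =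
        numDerangements (Fintype.card α - 2) +
          if a = b then 0 else numDerangements (Fintype.card α - 3) := by
    intro a ha b hb
    rw [← card_derangements_apply_eq_and_apply_eq (ne_of_mem_of_not_mem ha he).symm
      (ne_of_mem_of_not_mem hb he).symm, filter_filter]
    congr 1
    ext σ
    simp only [mem_filter, mem_univ, true_and, Prod.mk.injEq]
    constructor
    · rintro ⟨⟨hd, -, -⟩, h1, h2⟩
      exact ⟨hd, h1, Perm.inv_eq_iff_eq.mp h2 |>.symm⟩
    · rintro ⟨hd, h1, h2⟩
      have h2' : σ⁻¹ e = b := Perm.inv_eq_iff_eq.mpr h2.symm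
      exact ⟨⟨hd, h1 ▸ ha, h2' ▸ hb⟩, h1, h2'⟩
  have hrow : ∀ a ∈ S, ∑ b ∈ S, (numDerangements (Fintype.card α - 2) +
      if a = b then 0 else numDerangements (Fintype.card α - 3)) =
        #S * numDerangements (Fintype.card α - 2) +
          (#S - 1) * numDerangements (Fintype.card α - 3) := fun a ha => by
    simp [sum_add_distrib, sum_ite, filter_ne, card_erase_of_mem ha]
  rw [sum_congr rfl fun a ha => (sum_congr rfl (hfiber a ha)).trans (hrow a ha), sum_const,
    smul_eq_mul]
  ring

end Derangements

noncomputable def nonidentityNongenerators (G : Type*) [Group G] [Fintype G] [DecidableEq G] :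
    Finset G :=
  {x | x ≠ 1 ∧ orderOf x ≠ Fintype.card G}

section StrongPowerGraph

variable {G : Type*} [Group G] [Fintype G]

theorem strongPowerGraph_adj_one_iff {y : G} :
    (strongPowerGraph G).Adj 1 y ↔ y ≠ 1 ∧ orderOf y ≠ Fintype.card G := by
  constructor
  · rintro ⟨h1y, _, m, -, -, hm, hmn, hpow⟩
    refine ⟨h1y.symm, fun hy => ?_⟩
    rw [one_pow, eq_comm, ← orderOf_dvd_iff_pow_eq_one, hy] at hpow
    exact absurd (Nat.le_of_dvd hm hpow) (not_le.mpr hmn)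
  · rintro ⟨hy, hyn⟩
    have hlt : orderOf y < Fintype.card G := lt_of_le_of_ne orderOf_le_card_univ hyn
    have hy1 : orderOf y ≠ 1 := fun h => hy (orderOf_eq_one_iff.mp h)
    have hpos := orderOf_pos y
    exact ⟨Ne.symm hy, 1, orderOf y, one_pos, by omega, hpos, hlt,
      by rw [one_pow, pow_orderOf_eq_one]⟩

theorem strongPowerGraph_adj_of_ne_one [IsCyclic G] {x y : G} (hx : x ≠ 1) (hy : y ≠ 1)
    (hxy : x ≠ y) : (strongPowerGraph G).Adj x y := by
  obtain ⟨g, hg⟩ := IsCyclic.exists_monoid_generator (α := G)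
  have hexp : ∀ z : G, z ≠ 1 → ∃ i, 0 < i ∧ i < Fintype.card G ∧ g ^ i = z := by
    intro z hz
    obtain ⟨k, rfl⟩ := Submonoid.mem_powers_iff _ _ |>.mp (hg z)
    refine ⟨k % orderOf g, Nat.pos_of_ne_zero fun h => hz ?_, ?_, pow_mod_orderOf g k⟩
    · rw [← pow_mod_orderOf, h, pow_zero]
    · rw [← Nat.card_eq_fintype_card, ← orderOf_eq_card_of_forall_mem_powers hg]
      exact Nat.mod_lt _ (orderOf_pos g)
  obtain ⟨i, hi0, hin, rfl⟩ := hexp x hx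
  obtain ⟨j, hj0, hjn, rfl⟩ := hexp y hy
  exact ⟨hxy, j, i, hj0, hjn, hi0, hin, by rw [← pow_mul, ← pow_mul, mul_comm]⟩

variable [DecidableEq G]

theorem forall_strongPowerGraph_adj_apply_iff [IsCyclic G] (σ : Perm G) :
    (∀ x, (strongPowerGraph G).Adj (σ x) x) ↔
      (∀ x, σ x ≠ x) ∧ σ 1 ∈ nonidentityNongenerators G ∧
        σ⁻¹ 1 ∈ nonidentityNongenerators G := by
  simp only [nonidentityNongenerators, mem_filter, mem_univ, true_and]
  constructor
  · intro h
    refine ⟨fun x => (h x).ne, ?_, ?_⟩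
    · simpa [SimpleGraph.adj_comm, strongPowerGraph_adj_one_iff] using h 1
    · simpa [strongPowerGraph_adj_one_iff] using h (σ⁻¹ 1)
  · rintro ⟨hd, h1, hinv1⟩ x
    by_cases hx : x = 1
    · subst hx
      exact (strongPowerGraph_adj_one_iff.mpr h1).symm
    by_cases hσx : σ x = 1
    · rw [hσx, strongPowerGraph_adj_one_iff]
      rwa [← Perm.eq_inv_iff_eq.mpr hσx] at hinv1
    exact strongPowerGraph_adj_of_ne_one hσx hx (hd x)

theorem card_nonidentityNongenerators [IsCyclic G] (hG : 1 < Fintype.card G) :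
    #(nonidentityNongenerators G) = Fintype.card G - φ (Fintype.card G) - 1 := by
  set generators : Finset G := {x | orderOf x = Fintype.card G}
  have hgen : #generators = φ (Fintype.card G) := IsCyclic.card_orderOf_eq_totient dvd_rfl
  have hsub : generators ⊆ univ.erase 1 := fun x hx => by
    rw [mem_filter] at hx
    rw [mem_erase]
    refine ⟨?_, mem_univ x⟩
    rintro rfl
    simp [← hx.2] at hG
  have hS : nonidentityNongenerators G = univ.erase 1 \ generators := by
    ext x
    simp [nonidentityNongenerators, generators]
  rw [hS, card_sdiff_of_subset hsub, card_erase_of_mem (mem_univ 1), Finset.card_univ, hgen,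
    Nat.sub_right_comm]

end StrongPowerGraph

/-- if `G` is cyclic of order `n ≥ 2`, the permanent of the adjacency matrix of
`P_s(G)` equals
`(n - φ(n) - 1) Σ_{r=1}^{n-1} (-1)^{r-1} (n-1-r)! (C(n-2, r-1) + (n-2-φ(n)) C(n-3, r-1))`. -/
theorem strongPowerGraph_permanent_adjMatrix (G : Type*) [Group G] [Fintype G]
    [DecidableEq G] (hG : IsCyclic G) (n : ℕ) (hcard : Fintype.card G = n) (hn : 2 ≤ n) :
    ((strongPowerGraph G).adjMatrix ℤ).permanent =
      ((n : ℤ) - Nat.totient n - 1) *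
        ∑ r ∈ Icc 1 (n - 1), (-1 : ℤ) ^ (r - 1) * (Nat.factorial (n - 1 - r) : ℤ) *
          ((Nat.choose (n - 2) (r - 1) : ℤ) +
            ((n : ℤ) - 2 - Nat.totient n) * (Nat.choose (n - 3) (r - 1) : ℤ)) := by
  subst hcard
  set s := #(nonidentityNongenerators G) with hs_def
  have hs_cast : (s : ℤ) = Fintype.card G - φ (Fintype.card G) - 1 := by
    have := totient_lt _ hn
    rw [hs_def, card_nonidentityNongenerators hn]
    omega
  have h1_notMem : (1 : G) ∉ nonidentityNongenerators G := by simp [nonidentityNongenerators]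
  rw [SimpleGraph.permanent_adjMatrix,
    filter_congr fun σ _ => forall_strongPowerGraph_adj_apply_iff σ,
    card_derangements_apply_mem_and_inv_apply_mem h1_notMem, ← hs_def, ← hs_cast]
  rcases Nat.eq_zero_or_pos s with h0 | hpos
  · simp [h0]
  have h3 : 3 ≤ Fintype.card G := by
    have := totient_pos.mpr (by omega : 0 < Fintype.card G)
    omega
  rw [show ((Fintype.card G : ℤ) - 2 - φ (Fintype.card G)) = s - 1 by omega,
    sum_Icc_alternating_factorial_mul_choose h3]
  push_cast [hpos]
  ring
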